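/- Let H₀, H₁ be complex Hilbert spaces and K := H₀ ⊕ H₁. For Z ∈ B(H₀), L ∈ B(H₀; H₁) and W ∈ B(H₁), the series product of the adjoint of F_{Z,L,W} with F_{Z,L,W} is the block-diagonal operator: (F_{Z,L,W})* ◁ F_{Z,L,W} = [[Z* + Z, 0], [0, W*W − I]]. -/

import Mathlib

open ContinuousLinearMap

noncomputable section

variable (H₀ H₁ : Type*) [NormedAddCommGroup H₀] [InnerProductSpace ℂ H₀] [CompleteSpace H₀]
  [NormedAddCommGroup H₁] [InnerProductSpace ℂ H₁] [CompleteSpace H₁]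

/-- The inclusion `H₀ → H₀ ⊕ H₁` (Hilbert-space direct sum). -/
def inl0 : H₀ →L[ℂ] WithLp 2 (H₀ × H₁) :=
  ((WithLp.prodContinuousLinearEquiv 2 ℂ H₀ H₁).symm : H₀ × H₁ →L[ℂ] WithLp 2 (H₀ × H₁)) ∘L
    ContinuousLinearMap.inl ℂ H₀ H₁

/-- The inclusion `H₁ → H₀ ⊕ H₁`. -/
def inr1 : H₁ →L[ℂ] WithLp 2 (H₀ × H₁) :=
  ((WithLp.prodContinuousLinearEquiv 2 ℂ H₀ H₁).symm : H₀ × H₁ →L[ℂ] WithLp 2 (H₀ × H₁)) ∘L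
    ContinuousLinearMap.inr ℂ H₀ H₁

/-- The projection `H₀ ⊕ H₁ → H₀`. -/
def fst0 : WithLp 2 (H₀ × H₁) →L[ℂ] H₀ :=
  ContinuousLinearMap.fst ℂ H₀ H₁ ∘L
    ((WithLp.prodContinuousLinearEquiv 2 ℂ H₀ H₁) : WithLp 2 (H₀ × H₁) →L[ℂ] H₀ × H₁)

/-- The projection `H₀ ⊕ H₁ → H₁`. -/
def snd1 : WithLp 2 (H₀ × H₁) →L[ℂ] H₁ :=
  ContinuousLinearMap.snd ℂ H₀ H₁ ∘L
    ((WithLp.prodContinuousLinearEquiv 2 ℂ H₀ H₁) : WithLp 2 (H₀ × H₁) →L[ℂ] H₀ × H₁)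

variable {H₀ H₁}

/-- The block operator `[[A, C], [B, D]]` on `H₀ ⊕ H₁`. -/
def blk (A : H₀ →L[ℂ] H₀) (C : H₁ →L[ℂ] H₀) (B : H₀ →L[ℂ] H₁) (D : H₁ →L[ℂ] H₁) :
    WithLp 2 (H₀ × H₁) →L[ℂ] WithLp 2 (H₀ × H₁) :=
  inl0 H₀ H₁ ∘L A ∘L fst0 H₀ H₁ + inl0 H₀ H₁ ∘L C ∘L snd1 H₀ H₁ +
    inr1 H₀ H₁ ∘L B ∘L fst0 H₀ H₁ + inr1 H₀ H₁ ∘L D ∘L snd1 H₀ H₁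

/-- `Δ`, the orthogonal projection of `H₀ ⊕ H₁` onto `H₁`. -/
def projR : WithLp 2 (H₀ × H₁) →L[ℂ] WithLp 2 (H₀ × H₁) :=
  inr1 H₀ H₁ ∘L snd1 H₀ H₁

/-- The series product `F₁ ◁ F₂ = F₁ + F₂ + F₁ Δ F₂` on `B(H₀ ⊕ H₁)`. -/
def seriesProd (F₁ F₂ : WithLp 2 (H₀ × H₁) →L[ℂ] WithLp 2 (H₀ × H₁)) :
    WithLp 2 (H₀ × H₁) →L[ℂ] WithLp 2 (H₀ × H₁) :=
  F₁ + F₂ + F₁ * projR * F₂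

/-- `F_{Z,L,W} = [[Z - ½L*L, -L*W], [L, W - 1]]`. -/
def FZLW (Z : H₀ →L[ℂ] H₀) (L : H₀ →L[ℂ] H₁) (W : H₁ →L[ℂ] H₁) :
    WithLp 2 (H₀ × H₁) →L[ℂ] WithLp 2 (H₀ × H₁) :=
  blk (Z - (2 : ℂ)⁻¹ • (adjoint L ∘L L)) (-(adjoint L ∘L W)) L (W - 1)

section BlockAlgebra

omit [CompleteSpace H₀] [CompleteSpace H₁]

variable (H₀ H₁)

lemma fst0_comp_inl0 : fst0 H₀ H₁ ∘L inl0 H₀ H₁ = 1 := rfl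
lemma fst0_comp_inr1 : fst0 H₀ H₁ ∘L inr1 H₀ H₁ = 0 := rfl
lemma snd1_comp_inl0 : snd1 H₀ H₁ ∘L inl0 H₀ H₁ = 0 := rfl
lemma snd1_comp_inr1 : snd1 H₀ H₁ ∘L inr1 H₀ H₁ = 1 := rfl

variable {H₀ H₁}

lemma blk_add_blk (A A' : H₀ →L[ℂ] H₀) (C C' : H₁ →L[ℂ] H₀) (B B' : H₀ →L[ℂ] H₁)
    (D D' : H₁ →L[ℂ] H₁) :
    blk A C B D + blk A' C' B' D' = blk (A + A') (C + C') (B + B') (D + D') := by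
  simp only [blk, comp_add, add_comp]
  abel

lemma blk_mul_blk (A A' : H₀ →L[ℂ] H₀) (C C' : H₁ →L[ℂ] H₀) (B B' : H₀ →L[ℂ] H₁)
    (D D' : H₁ →L[ℂ] H₁) :
    blk A C B D * blk A' C' B' D' =
      blk (A ∘L A' + C ∘L B') (A ∘L C' + C ∘L D') (B ∘L A' + D ∘L B') (B ∘L C' + D ∘L D') := by
  simp only [blk, mul_def, comp_add, add_comp, comp_assoc]
  simp only [← comp_assoc (fst0 H₀ H₁), ← comp_assoc (snd1 H₀ H₁), fst0_comp_inl0,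
    fst0_comp_inr1, snd1_comp_inl0, snd1_comp_inr1, one_def, id_comp, zero_comp, comp_zero,
    add_zero, zero_add]
  abel

lemma projR_eq_blk : (projR : WithLp 2 (H₀ × H₁) →L[ℂ] WithLp 2 (H₀ × H₁)) = blk 0 0 0 1 := by
  simp only [projR, blk, comp_zero, zero_comp, one_def, id_comp, zero_add]

lemma seriesProd_blk (A A' : H₀ →L[ℂ] H₀) (C C' : H₁ →L[ℂ] H₀) (B B' : H₀ →L[ℂ] H₁)
    (D D' : H₁ →L[ℂ] H₁) :
    seriesProd (blk A C B D) (blk A' C' B' D') =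
      blk (A + A' + C ∘L B') (C + C' + C ∘L D') (B + B' + D ∘L B') (D + D' + D ∘L D') := by
  simp only [seriesProd, projR_eq_blk, blk_mul_blk, blk_add_blk, comp_zero, zero_comp, one_def,
    comp_id, add_zero, zero_add]

end BlockAlgebra

section Adjoint

variable (H₀ H₁)

lemma adjoint_inl0 : adjoint (inl0 H₀ H₁) = fst0 H₀ H₁ := by
  refine ((eq_adjoint_iff _ _).mpr fun x y => ?_).symm
  change inner ℂ x.fst y = inner ℂ x.fst y + inner ℂ x.snd (0 : H₁)
  rw [inner_zero_right, add_zero]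

lemma adjoint_inr1 : adjoint (inr1 H₀ H₁) = snd1 H₀ H₁ := by
  refine ((eq_adjoint_iff _ _).mpr fun x y => ?_).symm
  change inner ℂ x.snd y = inner ℂ x.fst (0 : H₀) + inner ℂ x.snd y
  rw [inner_zero_right, zero_add]

lemma adjoint_fst0 : adjoint (fst0 H₀ H₁) = inl0 H₀ H₁ := by
  rw [← adjoint_inl0, adjoint_adjoint]

lemma adjoint_snd1 : adjoint (snd1 H₀ H₁) = inr1 H₀ H₁ := by
  rw [← adjoint_inr1, adjoint_adjoint]

variable {H₀ H₁}

lemma adjoint_blk (A : H₀ →L[ℂ] H₀) (C : H₁ →L[ℂ] H₀) (B : H₀ →L[ℂ] H₁) (D : H₁ →L[ℂ] H₁) :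
    adjoint (blk A C B D) = blk (adjoint A) (adjoint B) (adjoint C) (adjoint D) := by
  simp only [blk, map_add, adjoint_comp, adjoint_inl0, adjoint_inr1, adjoint_fst0, adjoint_snd1,
    comp_assoc]
  abel

end Adjoint

theorem seriesProd_adjoint_FZLW_self (Z : H₀ →L[ℂ] H₀) (L : H₀ →L[ℂ] H₁) (W : H₁ →L[ℂ] H₁) :
    seriesProd (adjoint (FZLW Z L W)) (FZLW Z L W) =
      blk (adjoint Z + Z) 0 0 (adjoint W * W - 1) := by
  have adjoint_half : adjoint ((2 : ℂ)⁻¹ • (adjoint L ∘L L)) = (2 : ℂ)⁻¹ • (adjoint L ∘L L) := by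
    rw [adjoint.map_smulₛₗ, adjoint_comp, adjoint_adjoint, map_inv₀, map_ofNat]
  rw [FZLW, adjoint_blk, seriesProd_blk]
  simp only [map_sub, map_neg, adjoint_half, adjoint_comp, adjoint_adjoint, adjoint_one]
  congr 1
  · module
  · rw [one_def, comp_sub, comp_id]
    abel
  · rw [one_def, sub_comp, id_comp]
    abel
  · rw [mul_def, one_def, comp_sub, sub_comp, sub_comp, comp_id, id_comp, id_comp]
    abel
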